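/- The function F is locally Lipschitz on U: for every point p ∈ U there exist δ > 0 and a constant K ≥ 0 such that F is Lipschitz with constant K on the intersection of U with the open ball of radius δ about p. -/

import Mathlib

/-- The speed function: `arctan κ₁ + arctan κ₂` if `κ₁κ₂ ≤ 1`, and
`(π/4)(κ₁κ₂ + 1)` if `κ₁κ₂ > 1`. -/
noncomputable def Fspeed (κ₁ κ₂ : ℝ) : ℝ :=
  if κ₁ * κ₂ ≤ 1 then Real.arctan κ₁ + Real.arctan κ₂
  else (Real.pi / 4) * (κ₁ * κ₂ + 1)

/-- The domain `U = {κ₁κ₂ < 1} ∪ {κ₁ > 0 ∧ κ₂ > 0}`. -/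
def Uset : Set (ℝ × ℝ) := {p | p.1 * p.2 < 1 ∨ (0 < p.1 ∧ 0 < p.2)}

/-! On `{κ₁κ₂ < 1}` the function `F` is the smooth function `arctan κ₁ + arctan κ₂`. The rest of
`U` lies in the open region `κ₁, κ₂ > 0`, `κ₁ + κ₂ > 4/π`, where `F` is the maximum of its two
smooth branches: with `u = (κ₁κ₂ - 1)/(κ₁ + κ₂)` they read `π/2 + arctan u` and
`π/2 + (π/4)(κ₁ + κ₂) u`, and `arctan u` lies between `0` and `u` while `(π/4)(κ₁ + κ₂) ≥ 1`, so the
second branch dominates exactly when `u ≥ 0`. A maximum of smooth functions is locally Lipschitz. -/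

open Real Filter Topology Metric

lemma Real.arctan_le_self {x : ℝ} (hx : 0 ≤ x) : arctan x ≤ x := by
  simpa using le_tan (arctan_nonneg.2 hx) (arctan_lt_pi_div_two x)

lemma Real.self_le_arctan {x : ℝ} (hx : x ≤ 0) : x ≤ arctan x := by
  simpa [arctan_neg] using arctan_le_self (neg_nonneg.2 hx)

lemma Real.arctan_add_arctan_of_pos {a b : ℝ} (ha : 0 < a) (hb : 0 < b) :
    arctan a + arctan b = π / 2 + arctan ((a * b - 1) / (a + b)) := by
  have hab : a * -b⁻¹ < 1 := by nlinarith [mul_pos ha (inv_pos.2 hb)]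
  have hsum : arctan a + arctan (-b⁻¹) = arctan ((a * b - 1) / (a + b)) := by
    rw [arctan_add hab]
    have hden : 1 - a * -b⁻¹ = (a + b) / b := by field_simp; ring
    rw [hden]
    congr 1
    field_simp
    ring
  rw [arctan_neg, arctan_inv_of_pos hb] at hsum
  linarith

lemma Fspeed_eq_max {a b : ℝ} (ha : 0 < a) (hb : 0 < b) (hs : 4 / π ≤ a + b) :
    Fspeed a b = max (arctan a + arctan b) (π / 4 * (a * b + 1)) := by
  set u := (a * b - 1) / (a + b)
  have hc : 1 ≤ π / 4 * (a + b) := by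
    rw [div_le_iff₀ pi_pos] at hs
    linarith
  have hdiff : arctan a + arctan b - π / 4 * (a * b + 1) = arctan u - π / 4 * (a + b) * u := by
    have hu : π / 4 * (a + b) * u = π / 4 * (a * b - 1) := by
      simp only [u]
      field_simp
    rw [arctan_add_arctan_of_pos ha hb, hu]
    ring
  unfold Fspeed
  split_ifs with h
  · have hu : u ≤ 0 := div_nonpos_of_nonpos_of_nonneg (by linarith) (by linarith)
    have harctan := self_le_arctan hu
    exact (max_eq_left (by nlinarith)).symm
  · have hu : 0 ≤ u := div_nonneg (by linarith) (by linarith)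
    have harctan := arctan_le_self hu
    exact (max_eq_right (by nlinarith)).symm

lemma LocallyLipschitz.exists_lipschitzOnWith_of_eventuallyEq {α β : Type*}
    [PseudoEMetricSpace α] [PseudoEMetricSpace β] {f g : α → β} {x : α}
    (hg : LocallyLipschitz g) (hfg : f =ᶠ[𝓝 x] g) :
    ∃ K, ∃ t ∈ 𝓝 x, LipschitzOnWith K f t := by
  obtain ⟨K, t, ht, hK⟩ := hg x
  refine ⟨K, t ∩ {y | f y = g y}, inter_mem ht hfg, fun y hy z hz => ?_⟩
  rw [hy.2, hz.2]
  exact hK hy.1 hz.1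

lemma LocallyLipschitzOn.exists_lipschitzOnWith_inter_ball {α β : Type*}
    [PseudoMetricSpace α] [PseudoEMetricSpace β] {f : α → β} {s : Set α} {x : α}
    (hf : LocallyLipschitzOn s f) (hx : x ∈ s) :
    ∃ δ : ℝ, 0 < δ ∧ ∃ K, LipschitzOnWith K f (s ∩ ball x δ) := by
  obtain ⟨K, t, ht, hK⟩ := hf hx
  obtain ⟨δ, hδ, hsub⟩ := mem_nhdsWithin_iff.1 ht
  exact ⟨δ, hδ, K, hK.mono (Set.inter_comm s _ ▸ hsub)⟩

lemma Fspeed_eventuallyEq_arctan_add {p : ℝ × ℝ} (hp : p.1 * p.2 < 1) :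
    (fun q : ℝ × ℝ => Fspeed q.1 q.2) =ᶠ[𝓝 p] fun q => arctan q.1 + arctan q.2 := by
  have hnear : ∀ᶠ q : ℝ × ℝ in 𝓝 p, q.1 * q.2 < 1 :=
    (continuous_fst.mul continuous_snd).continuousAt.eventually_lt continuousAt_const hp
  filter_upwards [hnear] with q hq
  exact if_pos hq.le

lemma Fspeed_eventuallyEq_max {p : ℝ × ℝ} (h₁ : 0 < p.1) (h₂ : 0 < p.2) (hp : 1 ≤ p.1 * p.2) :
    (fun q : ℝ × ℝ => Fspeed q.1 q.2) =ᶠ[𝓝 p]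
      fun q => max (arctan q.1 + arctan q.2) (π / 4 * (q.1 * q.2 + 1)) := by
  have hs : 4 / π < p.1 + p.2 := by
    rw [div_lt_iff₀ pi_pos]
    nlinarith [pi_gt_three, sq_nonneg (p.1 - p.2)]
  have hnear : ∀ᶠ q : ℝ × ℝ in 𝓝 p, 0 < q.1 ∧ 0 < q.2 ∧ 4 / π < q.1 + q.2 :=
    (continuous_fst.continuousAt.eventually_const_lt h₁).and
      ((continuous_snd.continuousAt.eventually_const_lt h₂).and
        ((continuous_fst.add continuous_snd).continuousAt.eventually_const_lt hs))
  filter_upwards [hnear] with q ⟨hq₁, hq₂, hqs⟩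
  exact Fspeed_eq_max hq₁ hq₂ hqs.le

lemma locallyLipschitz_arctan_add :
    LocallyLipschitz fun q : ℝ × ℝ => arctan q.1 + arctan q.2 :=
  ((contDiff_arctan.comp contDiff_fst).add (contDiff_arctan.comp contDiff_snd)).locallyLipschitz

lemma locallyLipschitz_max_arctan_add :
    LocallyLipschitz fun q : ℝ × ℝ => max (arctan q.1 + arctan q.2) (π / 4 * (q.1 * q.2 + 1)) :=
  locallyLipschitz_arctan_add.max (ContDiff.locallyLipschitz (𝕂 := ℝ) (by fun_prop))

lemma locallyLipschitzOn_Fspeed : LocallyLipschitzOn Uset fun q : ℝ × ℝ => Fspeed q.1 q.2 := by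
  intro p hp
  obtain ⟨K, t, ht, hK⟩ :
      ∃ K, ∃ t ∈ 𝓝 p, LipschitzOnWith K (fun q : ℝ × ℝ => Fspeed q.1 q.2) t := by
    by_cases hlt : p.1 * p.2 < 1
    · exact locallyLipschitz_arctan_add.exists_lipschitzOnWith_of_eventuallyEq
        (Fspeed_eventuallyEq_arctan_add hlt)
    · obtain ⟨h₁, h₂⟩ := hp.resolve_left hlt
      exact locallyLipschitz_max_arctan_add.exists_lipschitzOnWith_of_eventuallyEq
        (Fspeed_eventuallyEq_max h₁ h₂ (not_lt.1 hlt))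
  exact ⟨K, t, mem_nhdsWithin_of_mem_nhds ht, hK⟩

/-- `F` is locally Lipschitz on `U`: near each point of `U` it is Lipschitz
with some constant `K ≥ 0` on the intersection of `U` with a small ball. -/
theorem Fspeed_locally_lipschitz :
    ∀ p ∈ Uset, ∃ δ : ℝ, 0 < δ ∧ ∃ K : NNReal,
      LipschitzOnWith K (fun q : ℝ × ℝ => Fspeed q.1 q.2) (Uset ∩ Metric.ball p δ) :=
  fun _ hp => locallyLipschitzOn_Fspeed.exists_lipschitzOnWith_inter_ball hp
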